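/- Let k be a field of characteristic p > 0, let H be a subgroup of the automorphism group of projective n-space over k (i.e. PGL(n+1, k)) such that H is generated by elements whose orders are powers of p. If two points P₁ ≠ P₂ of ℙⁿ(k) are fixed by every element of H, then every point of the projective line through P₁ and P₂ is fixed by every element of H. -/

import Mathlib

/-!
An element `g` of `GL(n+1, k)` whose image in `PGL` has `p`-power order satisfies
`g ^ p ^ r = μ • 1`, so each of its eigenvalues `c` satisfies `c ^ p ^ r = μ`; since Frobenius is
injective in characteristic `p`, `g` has a single eigenvalue. Hence every generator of `H` acts on
representatives of `P₁` and `P₂` by the same scalar, and the elements with this property form a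
subgroup, which therefore contains `H`. An element acting by one scalar on two vectors acts by
that scalar on their whole span.
-/

open Matrix

namespace Matrix

variable {ι R : Type*} [Fintype ι] [DecidableEq ι]

theorem pow_mulVec_of_mulVec_eq_smul [CommSemiring R] {A : Matrix ι ι R} {v : ι → R} {c : R}
    (h : A *ᵥ v = c • v) (N : ℕ) : (A ^ N) *ᵥ v = c ^ N • v := by
  induction N with
  | zero => simp
  | succ N ih => rw [pow_succ, ← mulVec_mulVec, h, mulVec_smul, ih, pow_succ', smul_smul]

theorem eigenvalue_pow_eq_of_pow_eq_smul_one [CommRing R] [IsDomain R] {A : Matrix ι ι R}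
    {v : ι → R} (hv : v ≠ 0) {c μ : R} (h : A *ᵥ v = c • v) {N : ℕ} (hN : A ^ N = μ • 1) :
    c ^ N = μ := by
  have hpow := pow_mulVec_of_mulVec_eq_smul h N
  rw [hN, smul_mulVec, one_mulVec] at hpow
  exact smul_left_injective R hv hpow.symm

theorem eigenvalue_unique_of_pow_char_pow_eq_smul_one [CommRing R] [IsDomain R] (p : ℕ)
    [ExpChar R p] {A : Matrix ι ι R} {r : ℕ} {μ : R} (hA : A ^ p ^ r = μ • 1)
    {v w : ι → R} (hv : v ≠ 0) (hw : w ≠ 0) {c d : R} (hcv : A *ᵥ v = c • v)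
    (hdw : A *ᵥ w = d • w) : c = d :=
  iterateFrobenius_inj R p r <| by
    rw [iterateFrobenius_def, iterateFrobenius_def, eigenvalue_pow_eq_of_pow_eq_smul_one hv hcv hA,
      eigenvalue_pow_eq_of_pow_eq_smul_one hw hdw hA]

namespace GeneralLinearGroup

def sameEigenvalueSubgroup [CommRing R] (v w : ι → R) : Subgroup (GL ι R) where
  carrier := {g | ∃ c : Rˣ,
    (g : Matrix ι ι R) *ᵥ v = (c : R) • v ∧ (g : Matrix ι ι R) *ᵥ w = (c : R) • w}
  one_mem' := ⟨1, by simp, by simp⟩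
  mul_mem' := by
    rintro g h ⟨c, hgv, hgw⟩ ⟨d, hhv, hhw⟩
    refine ⟨c * d, ?_, ?_⟩ <;>
      simp only [Units.val_mul, ← mulVec_mulVec, hgv, hgw, hhv, hhw, mulVec_smul, smul_smul,
        mul_comm (d : R)]
  inv_mem' := by
    rintro g ⟨c, hgv, hgw⟩
    have inv_mulVec {u : ι → R} (hu : (g : Matrix ι ι R) *ᵥ u = (c : R) • u) :
        ((g⁻¹ : GL ι R) : Matrix ι ι R) *ᵥ u = ((c⁻¹ : Rˣ) : R) • u := by
      rw [← Units.smul_def, eq_inv_smul_iff, Units.smul_def, ← mulVec_smul, ← hu, mulVec_mulVec,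
        ← Units.val_mul, inv_mul_cancel, Units.val_one, one_mulVec]
    exact ⟨c⁻¹, inv_mulVec hgv, inv_mulVec hgw⟩

theorem mulVec_add_of_mem_sameEigenvalueSubgroup [CommRing R] {v w : ι → R} {g : GL ι R}
    (hg : g ∈ sameEigenvalueSubgroup v w) (a b : R) :
    ∃ c : Rˣ, (g : Matrix ι ι R) *ᵥ (a • v + b • w) = (c : R) • (a • v + b • w) := by
  obtain ⟨c, hv, hw⟩ := hg
  refine ⟨c, ?_⟩
  rw [mulVec_add, mulVec_smul, mulVec_smul, hv, hw, smul_comm a, smul_comm b, smul_add]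

end GeneralLinearGroup

end Matrix

theorem stmt0_general (p : ℕ) [Fact p.Prime] (k : Type*) [Field k] [CharP k p] (n : ℕ)
    (H : Subgroup (Matrix.GeneralLinearGroup (Fin (n + 1)) k))
    (S : Set (Matrix.GeneralLinearGroup (Fin (n + 1)) k))
    (hgen : H = Subgroup.closure S)
    (hord : ∀ s ∈ S, ∃ (r : ℕ) (μ : kˣ),
      (s : Matrix (Fin (n + 1)) (Fin (n + 1)) k) ^ (p ^ r) = (μ : k) • (1 : Matrix (Fin (n + 1)) (Fin (n + 1)) k))
    (P₁ P₂ : Projectivization k (Fin (n + 1) → k))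
    (hfix₁ : ∀ h ∈ H, ∃ c : kˣ,
      Matrix.mulVec (h : Matrix (Fin (n + 1)) (Fin (n + 1)) k) P₁.rep = (c : k) • P₁.rep)
    (hfix₂ : ∀ h ∈ H, ∃ c : kˣ,
      Matrix.mulVec (h : Matrix (Fin (n + 1)) (Fin (n + 1)) k) P₂.rep = (c : k) • P₂.rep) :
    ∀ h ∈ H, ∀ a b : k, a • P₁.rep + b • P₂.rep ≠ 0 →
      ∃ c : kˣ, Matrix.mulVec (h : Matrix (Fin (n + 1)) (Fin (n + 1)) k)
          (a • P₁.rep + b • P₂.rep) = (c : k) • (a • P₁.rep + b • P₂.rep) := by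
  have hH : H ≤ GeneralLinearGroup.sameEigenvalueSubgroup P₁.rep P₂.rep := by
    rw [hgen, Subgroup.closure_le]
    intro s hs
    have hsH : s ∈ H := hgen ▸ Subgroup.subset_closure hs
    obtain ⟨c₁, hc₁⟩ := hfix₁ s hsH
    obtain ⟨c₂, hc₂⟩ := hfix₂ s hsH
    obtain ⟨r, μ, hμ⟩ := hord s hs
    have hc : (c₁ : k) = c₂ := eigenvalue_unique_of_pow_char_pow_eq_smul_one p hμ
      P₁.rep_nonzero P₂.rep_nonzero hc₁ hc₂
    exact ⟨c₁, hc₁, hc ▸ hc₂⟩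
  intro h hh a b _
  exact GeneralLinearGroup.mulVec_add_of_mem_sameEigenvalueSubgroup (hH hh) a b

/-- If `H ≤ PGL(n+1,k)` (char p) is generated by elements whose orders are
powers of `p` and fixes two distinct points `P₁ ≠ P₂` of `ℙⁿ(k)`, then every point of the
projective line through `P₁` and `P₂` is fixed by every element of `H`.
Elements of PGL are represented by elements of GL; "order a power of p in PGL" means a
power `p^r` of the matrix is scalar; a point is fixed iff a (hence any) representing
vector is mapped to a nonzero scalar multiple of itself. -/
theorem stmt0 (p : ℕ) [Fact p.Prime] (k : Type*) [Field k] [CharP k p] (n : ℕ)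
    (H : Subgroup (Matrix.GeneralLinearGroup (Fin (n + 1)) k))
    (S : Set (Matrix.GeneralLinearGroup (Fin (n + 1)) k))
    (hgen : H = Subgroup.closure S)
    (hord : ∀ s ∈ S, ∃ (r : ℕ) (μ : kˣ),
      (s : Matrix (Fin (n + 1)) (Fin (n + 1)) k) ^ (p ^ r) = (μ : k) • (1 : Matrix (Fin (n + 1)) (Fin (n + 1)) k))
    (P₁ P₂ : Projectivization k (Fin (n + 1) → k)) (hne : P₁ ≠ P₂)
    (hfix₁ : ∀ h ∈ H, ∃ c : kˣ,
      Matrix.mulVec (h : Matrix (Fin (n + 1)) (Fin (n + 1)) k) P₁.rep = (c : k) • P₁.rep)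
    (hfix₂ : ∀ h ∈ H, ∃ c : kˣ,
      Matrix.mulVec (h : Matrix (Fin (n + 1)) (Fin (n + 1)) k) P₂.rep = (c : k) • P₂.rep) :
    ∀ h ∈ H, ∀ a b : k, a • P₁.rep + b • P₂.rep ≠ 0 →
      ∃ c : kˣ, Matrix.mulVec (h : Matrix (Fin (n + 1)) (Fin (n + 1)) k)
          (a • P₁.rep + b • P₂.rep) = (c : k) • (a • P₁.rep + b • P₂.rep) :=
  stmt0_general p k n H S hgen hord P₁ P₂ hfix₁ hfix₂
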